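/- For a prime power q, define Δ(a,b) = S_1(a)S_1(b) - S_1(a+b). Then for any b ∈ Z_+, Δ(1, b + (q-1)) - Δ(1, b) = S_1(1 + b). -/

import Mathlib

/-!
Every `X + θ` satisfies `(X + θ)^q - (X + θ) = X^q - X =: [1]`, so termwise
`(X + θ)^{-(b+q-1)} - (X + θ)^{-b} = -[1] (X + θ)^{-(b+q)}`, i.e.
`S_1(b+q-1) - S_1(b) = -[1] S_1(b+q)`. Multiplying by `S_1(1)` and using `[1] S_1(1) = -1`,
which is the logarithmic derivative of the split polynomial `X^q - X = ∏ (X - θ)`, gives the claim.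
-/

open Polynomial Finset

theorem inv_pow_add_sub_inv_pow {K : Type*} [Field K] {u : K} (hu : u ≠ 0) (k n : ℕ) :
    (u ^ (k + n))⁻¹ - (u ^ k)⁻¹ = -(u ^ (n + 1) - u) * (u ^ (k + n + 1))⁻¹ := by
  field_simp
  ring

namespace RatFunc

theorem X_add_C_ne_zero {F : Type*} [Field F] (θ : F) : (X + C θ : RatFunc F) ≠ 0 := by
  rw [← algebraMap_X, ← algebraMap_C, ← map_add]
  exact (map_ne_zero_iff _ (algebraMap_injective F)).mpr (Polynomial.X_add_C_ne_zero θ)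

variable {F : Type*} [Field F] [Fintype F]

local notation "q" => Fintype.card F

theorem X_pow_card_sub_X_ne_zero : (X ^ q - X : RatFunc F) ≠ 0 := by
  rw [← algebraMap_X, ← map_pow, ← map_sub]
  exact (map_ne_zero_iff _ (algebraMap_injective F)).mpr
    (FiniteField.X_pow_card_sub_X_ne_zero F Fintype.one_lt_card)

theorem X_add_C_pow_card (θ : F) : (X + C θ : RatFunc F) ^ q = X ^ q + C θ := by
  have := map_add (FiniteField.frobeniusAlgHom F (RatFunc F)) X (C θ)
  simpa [FiniteField.coe_frobeniusAlgHom, ← algebraMap_eq_C, ← map_pow] using this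

variable (F) in
noncomputable def invPowSum (k : ℕ) : RatFunc F := ∑ θ : F, ((X + C θ) ^ k)⁻¹

theorem invPowSum_one_mul_X_pow_card_sub_X : invPowSum F 1 * (X ^ q - X) = -1 := by
  have hsplit : (Polynomial.X ^ q - Polynomial.X : F[X]).Splits := by
    rw [splits_iff_card_roots, FiniteField.roots_X_pow_card_sub_X,
      FiniteField.X_pow_card_sub_X_natDegree_eq F Fintype.one_lt_card, ← card_def, card_univ]
  have hlogDeriv := (hsplit.map (algebraMap F (RatFunc F))).eval_derivative_eq_eval_mul_sum
    (x := X) (by simpa using X_pow_card_sub_X_ne_zero)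
  rw [hsplit.roots_map, FiniteField.roots_X_pow_card_sub_X] at hlogDeriv
  have hq : (q : RatFunc F) = 0 := by
    rw [← map_natCast (algebraMap F (RatFunc F)), FiniteField.cast_card_eq_zero, map_zero]
  have hneg : invPowSum F 1 = ∑ θ : F, (X - C θ : RatFunc F)⁻¹ :=
    Fintype.sum_equiv (Equiv.neg F) _ _ fun θ => by simp [sub_eq_add_neg]
  rw [hneg, mul_comm]
  simpa [derivative_X_pow, hq] using hlogDeriv.symm

theorem invPowSum_add_card_sub_one_sub (k : ℕ) :
    invPowSum F (k + (q - 1)) - invPowSum F k = -(X ^ q - X) * invPowSum F (k + q) := by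
  have hq : q - 1 + 1 = q := Nat.sub_add_cancel Fintype.card_pos
  rw [invPowSum, invPowSum, invPowSum, ← sum_sub_distrib, mul_sum]
  refine sum_congr rfl fun θ _ => ?_
  have hfrob : (X ^ q - X : RatFunc F) = (X + C θ) ^ (q - 1 + 1) - (X + C θ) := by
    rw [hq, X_add_C_pow_card]
    ring
  rw [hfrob, inv_pow_add_sub_inv_pow (X_add_C_ne_zero θ), add_assoc, hq]

end RatFunc

theorem stmt_8_general (q : ℕ)
    {F : Type} [Field F] [Fintype F] (hF : Fintype.card F = q)
    (S1 : ℕ → RatFunc F)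
    (hS1 : ∀ k, S1 k = ∑ θ : F, ((RatFunc.X + RatFunc.C θ) ^ k)⁻¹)
    (Δ : ℕ → ℕ → RatFunc F)
    (hΔ : ∀ a b, Δ a b = S1 a * S1 b - S1 (a + b))
    (b : ℕ) :
    Δ 1 (b + (q - 1)) - Δ 1 b = S1 (1 + b) := by
  obtain rfl : S1 = RatFunc.invPowSum F := funext hS1
  subst hF
  have hindex : 1 + (b + (Fintype.card F - 1)) = b + Fintype.card F := by
    have := Fintype.card_pos (α := F)
    omega
  rw [hΔ, hΔ, hindex]
  linear_combination RatFunc.invPowSum F 1 * RatFunc.invPowSum_add_card_sub_one_sub (F := F) b -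
    RatFunc.invPowSum F (b + Fintype.card F) * RatFunc.invPowSum_one_mul_X_pow_card_sub_X (F := F)

/-- With `Δ(a,b) = S_1(a)S_1(b) - S_1(a+b)`, one has
`Δ(1, b+(q-1)) - Δ(1,b) = S_1(1+b)`. -/
theorem stmt_8 (p s q : ℕ) (hp : p.Prime) (hs : 0 < s) (hq : q = p ^ s)
    {F : Type} [Field F] [Fintype F] (hF : Fintype.card F = q)
    (S1 : ℕ → RatFunc F)
    (hS1 : ∀ k, S1 k = ∑ θ : F, ((RatFunc.X + RatFunc.C θ) ^ k)⁻¹)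
    (Δ : ℕ → ℕ → RatFunc F)
    (hΔ : ∀ a b, Δ a b = S1 a * S1 b - S1 (a + b))
    (b : ℕ) (hb : 1 ≤ b) :
    Δ 1 (b + (q - 1)) - Δ 1 b = S1 (1 + b) :=
  stmt_8_general q hF S1 hS1 Δ hΔ b
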